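/- arXiv:1303.2087 — 2 statements merged into one kernel-verified Lean document; each statement's English description precedes it below -/
import Mathlib

section
/- Let a DMIC whose transition probability factorizes as p(y1,y2|x1,x2) = p(y2|x1,x2) q(y1|x1,y2) (Markov chain X2 - (X1,Y2) - Y1) be used n times memorylessly, with input blocks X1^n and X2^n independent of each other, and outputs Y1^n, Y2^n. Then I(X1^n;Y1^n) + I(X2^n;Y2^n|X1^n) <= sum_{i=1}^n [ I(X1i;Y1i) + I(X2i;Y2i|X1i) ]. -/
open scoped BigOperators

noncomputable section

namespace IT

/-- A probability mass function on a finite type. -/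
def IsPMF {α : Type*} [Fintype α] (p : α → ℝ) : Prop :=
  (∀ a, 0 ≤ p a) ∧ ∑ a, p a = 1

/-- The distribution (pushforward) of a random variable `X` under the pmf `μ`
on the sample space `Ω`. -/
def distOf {Ω α : Type*} [Fintype Ω] [DecidableEq α] (μ : Ω → ℝ) (X : Ω → α) : α → ℝ :=
  fun a => ∑ ω, if X ω = a then μ ω else 0

/-- Shannon entropy (base-2 logarithms) of a pmf on a finite type.
(Recall `Real.logb 2 0 = 0`, so the `0 log 0 = 0` convention is automatic.) -/
def ent {α : Type*} [Fintype α] (p : α → ℝ) : ℝ := -∑ a, p a * Real.logb 2 (p a)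

/-- Entropy `H(X)` of a finite-valued random variable `X` on `(Ω, μ)`. -/
def H {Ω α : Type*} [Fintype Ω] [Fintype α] [DecidableEq α] (μ : Ω → ℝ) (X : Ω → α) : ℝ :=
  ent (distOf μ X)

/-- Mutual information `I(X;Y)`. -/
def MI {Ω α β : Type*} [Fintype Ω] [Fintype α] [DecidableEq α] [Fintype β] [DecidableEq β]
    (μ : Ω → ℝ) (X : Ω → α) (Y : Ω → β) : ℝ :=
  H μ X + H μ Y - H μ (fun ω => (X ω, Y ω))

/-- Conditional mutual information `I(X;Y|Z)`. -/
def CMI {Ω α β γ : Type*} [Fintype Ω] [Fintype α] [DecidableEq α] [Fintype β] [DecidableEq β]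
    [Fintype γ] [DecidableEq γ] (μ : Ω → ℝ) (X : Ω → α) (Y : Ω → β) (Z : Ω → γ) : ℝ :=
  H μ (fun ω => (X ω, Z ω)) + H μ (fun ω => (Y ω, Z ω))
    - H μ (fun ω => (X ω, Y ω, Z ω)) - H μ Z

/-- `B` is conditionally independent of `A` given `C` (a Markov chain `A - C - B`). -/
def CondIndep {Ω α β γ : Type*} [Fintype Ω] [DecidableEq α] [DecidableEq β] [DecidableEq γ]
    (μ : Ω → ℝ) (A : Ω → α) (B : Ω → β) (C : Ω → γ) : Prop :=
  ∀ a b c,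
    distOf μ (fun ω => (A ω, B ω, C ω)) (a, b, c) * distOf μ C c =
      distOf μ (fun ω => (A ω, C ω)) (a, c) * distOf μ (fun ω => (B ω, C ω)) (b, c)

variable {A1 A2 B1 B2 : Type*}

/-- A discrete memoryless interference channel with input alphabets `A1, A2` and
output alphabets `B1, B2`: every pair of inputs yields a pmf on output pairs. -/
def IsChannel [Fintype B1] [Fintype B2] (W : A1 → A2 → B1 × B2 → ℝ) : Prop :=
  ∀ x1 x2, IsPMF (W x1 x2)

/-- DMZIC with weak interference: the transition probability factorizes as
`p(y1,y2|x1,x2) = p(y2|x2) q(y1|x1,y2)`, i.e. one-sided interference together with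
the Markov chain `X2 - (X1,Y2) - Y1`. -/
def WeakZ [Fintype B1] [Fintype B2] (W : A1 → A2 → B1 × B2 → ℝ) : Prop :=
  ∃ (p2 : A2 → B2 → ℝ) (q : A1 → B2 → B1 → ℝ),
    (∀ x2, IsPMF (p2 x2)) ∧ (∀ x1 y2, IsPMF (q x1 y2)) ∧
      ∀ x1 x2 y1 y2, W x1 x2 (y1, y2) = p2 x2 y2 * q x1 y2 y1

/-- Factorization `p(y1,y2|x1,x2) = p(y2|x1,x2) q(y1|x1,y2)`, i.e. the Markov chain
`X2 - (X1,Y2) - Y1`. -/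
def ChainX2X1Y2Y1 [Fintype B1] [Fintype B2] (W : A1 → A2 → B1 × B2 → ℝ) : Prop :=
  ∃ (pa : A1 → A2 → B2 → ℝ) (q : A1 → B2 → B1 → ℝ),
    (∀ x1 x2, IsPMF (pa x1 x2)) ∧ (∀ x1 y2, IsPMF (q x1 y2)) ∧
      ∀ x1 x2 y1 y2, W x1 x2 (y1, y2) = pa x1 x2 y2 * q x1 y2 y1

/-- The `n`-fold memoryless extension of the channel `W`. -/
def nFold (W : A1 → A2 → B1 × B2 → ℝ) (n : ℕ) (a : Fin n → A1) (b : Fin n → A2)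
    (y : (Fin n → B1) × (Fin n → B2)) : ℝ :=
  ∏ i, W (a i) (b i) (y.1 i, y.2 i)

/-- An `(n, M1, M2)` code for the interference channel. -/
structure Code (A1 A2 B1 B2 : Type*) (n M1 M2 : ℕ) where
  enc1 : Fin M1 → Fin n → A1
  enc2 : Fin M2 → Fin n → A2
  dec1 : (Fin n → B1) → Fin M1
  dec2 : (Fin n → B2) → Fin M2

/-- Average probability of error at receiver 1 (messages uniform and independent). -/
def err1 [Fintype B1] [Fintype B2] (W : A1 → A2 → B1 × B2 → ℝ) {n M1 M2 : ℕ}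
    (c : Code A1 A2 B1 B2 n M1 M2) : ℝ :=
  ((M1 : ℝ) * (M2 : ℝ))⁻¹ *
    ∑ w1 : Fin M1, ∑ w2 : Fin M2, ∑ y : (Fin n → B1) × (Fin n → B2),
      if c.dec1 y.1 ≠ w1 then nFold W n (c.enc1 w1) (c.enc2 w2) y else 0

/-- Average probability of error at receiver 2 (messages uniform and independent). -/
def err2 [Fintype B1] [Fintype B2] (W : A1 → A2 → B1 × B2 → ℝ) {n M1 M2 : ℕ}
    (c : Code A1 A2 B1 B2 n M1 M2) : ℝ :=
  ((M1 : ℝ) * (M2 : ℝ))⁻¹ *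
    ∑ w1 : Fin M1, ∑ w2 : Fin M2, ∑ y : (Fin n → B1) × (Fin n → B2),
      if c.dec2 y.2 ≠ w2 then nFold W n (c.enc1 w1) (c.enc2 w2) y else 0

/-- A (nonnegative) rate pair `(R1, R2)` is achievable if there are codes of blocklength `n`,
with at least `2 ^ (n R1)` and `2 ^ (n R2)` messages, whose average error probabilities at
the two receivers can be made arbitrarily small. -/
def Achievable [Fintype B1] [Fintype B2] (W : A1 → A2 → B1 × B2 → ℝ) (R1 R2 : ℝ) : Prop :=
  0 ≤ R1 ∧ 0 ≤ R2 ∧ ∀ ε : ℝ, 0 < ε →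
    ∃ (n M1 M2 : ℕ) (c : Code A1 A2 B1 B2 n M1 M2), 0 < n ∧
      (2 : ℝ) ^ ((n : ℝ) * R1) ≤ (M1 : ℝ) ∧ (2 : ℝ) ^ ((n : ℝ) * R2) ≤ (M2 : ℝ) ∧
      err1 W c ≤ ε ∧ err2 W c ≤ ε

/-- The sum-rate capacity: the supremum of `R1 + R2` over achievable rate pairs. -/
def sumCapacity [Fintype B1] [Fintype B2] (W : A1 → A2 → B1 × B2 → ℝ) : ℝ :=
  sSup {r : ℝ | ∃ R1 R2 : ℝ, Achievable W R1 R2 ∧ r = R1 + R2}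

/-- The capacity region: the closure of the set of achievable rate pairs. -/
def capacityRegion [Fintype B1] [Fintype B2] (W : A1 → A2 → B1 × B2 → ℝ) : Set (ℝ × ℝ) :=
  closure {p : ℝ × ℝ | Achievable W p.1 p.2}

/-- The joint pmf of `(X1, X2, Y1, Y2)` when the product input `p1 × p2` is fed to `W`. -/
def jointOf (W : A1 → A2 → B1 × B2 → ℝ) (p1 : A1 → ℝ) (p2 : A2 → ℝ) :
    A1 × A2 × B1 × B2 → ℝ :=
  fun z => p1 z.1 * p2 z.2.1 * W z.1 z.2.1 (z.2.2.1, z.2.2.2)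

/-- Coordinate projections on `A1 × A2 × B1 × B2`. -/
def pX1 : A1 × A2 × B1 × B2 → A1 := fun z => z.1
def pX2 : A1 × A2 × B1 × B2 → A2 := fun z => z.2.1
def pY1 : A1 × A2 × B1 × B2 → B1 := fun z => z.2.2.1
def pY2 : A1 × A2 × B1 × B2 → B2 := fun z => z.2.2.2

/-- The binary entropy function (base-2 logarithms). -/
def h2 (t : ℝ) : ℝ := -(t * Real.logb 2 t) - (1 - t) * Real.logb 2 (1 - t)

end IT

/-!
Write `X₁, X₂, Y₁, Y₂` for the four blocks. For any four random variables,
`I(X₁;Y₁) + I(X₂;Y₂|X₁) = H(Y₁) + H(Y₂|X₁,Y₁) - H(Y₁,Y₂|X₁,X₂) - I(X₂;Y₁|X₁,Y₂)`.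
Apply this to the blocks and drop the last term, which is nonnegative. Then `H(Y₁)` and
`H(Y₂|X₁,Y₁)` are at most the sums of their single-letter versions (chain rule, and
conditioning reduces entropy), while by memorylessness `H(Y₁,Y₂|X₁,X₂)` is exactly the sum of
the `H(Y₁ᵢ,Y₂ᵢ|X₁ᵢ,X₂ᵢ)`. Finally, apply the same identity to each letter. The factorization of
the channel makes `X₂ᵢ - (X₁ᵢ,Y₂ᵢ) - Y₁ᵢ` a Markov chain, so there the last term vanishes.
-/

namespace IT

open Finset Function

section Distribution

variable {Ω α β : Type*} [Fintype Ω] [DecidableEq α] [DecidableEq β] (μ : Ω → ℝ)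

lemma distOf_nonneg (hμ : ∀ ω, 0 ≤ μ ω) (X : Ω → α) (a : α) : 0 ≤ distOf μ X a :=
  sum_nonneg fun ω _ => by split_ifs <;> simp [hμ ω]

lemma sum_distOf_mul [Fintype α] (X : Ω → α) (g : α → ℝ) :
    ∑ a, distOf μ X a * g a = ∑ ω, μ ω * g (X ω) := by
  simp only [distOf, sum_mul, ite_mul, zero_mul]
  rw [sum_comm]
  simp

lemma sum_distOf [Fintype α] (X : Ω → α) : ∑ a, distOf μ X a = ∑ ω, μ ω := by
  simpa using sum_distOf_mul μ X 1

lemma distOf_comp [Fintype α] (X : Ω → α) (f : α → β) :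
    distOf μ (fun ω => f (X ω)) = distOf (distOf μ X) f := by
  funext b
  simpa [distOf, ite_mul] using (sum_distOf_mul μ X fun a => if f a = b then 1 else 0).symm

lemma distOf_comp_apply_of_injective (X : Ω → α) {f : α → β} (hf : Injective f) (a : α) :
    distOf μ (fun ω => f (X ω)) (f a) = distOf μ X a := by
  simp only [distOf, hf.eq_iff]

lemma distOf_le_distOf_comp (hμ : ∀ ω, 0 ≤ μ ω) (X : Ω → α) (f : α → β) (a : α) :
    distOf μ X a ≤ distOf μ (fun ω => f (X ω)) (f a) :=
  sum_le_sum fun ω _ => by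
    by_cases h : X ω = a
    · simp [h]
    · simp only [h, if_false]; split_ifs <;> simp [hμ ω]

lemma sum_distOf_pair_right [Fintype β] (X : Ω → α) (Y : Ω → β) (a : α) :
    ∑ b, distOf μ (fun ω => (X ω, Y ω)) (a, b) = distOf μ X a := by
  simp only [distOf, Prod.mk.injEq, ite_and]
  rw [sum_comm]
  simp

lemma sum_distOf_pair_left [Fintype α] (X : Ω → α) (Y : Ω → β) (b : β) :
    ∑ a, distOf μ (fun ω => (X ω, Y ω)) (a, b) = distOf μ Y b := by
  simp only [distOf, Prod.mk.injEq, ite_and]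
  rw [sum_comm]
  simp

end Distribution

section Entropy

variable {Ω α β : Type*} [Fintype Ω] [Fintype α] [DecidableEq α] [Fintype β] [DecidableEq β]
  (μ : Ω → ℝ)

lemma H_comp_eq_neg_sum (X : Ω → α) (f : α → β) :
    H μ (fun ω => f (X ω)) =
      -∑ a, distOf μ X a * Real.logb 2 (distOf μ (fun ω => f (X ω)) (f a)) := by
  rw [H, ent, distOf_comp μ X f, sum_distOf_mul]

lemma H_comp_of_leftInverse (X : Ω → α) (f : α → β) (g : β → α) (hfg : LeftInverse g f) :
    H μ (fun ω => f (X ω)) = H μ X := by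
  simp only [H_comp_eq_neg_sum, distOf_comp_apply_of_injective μ X hfg.injective]
  rfl

end Entropy

/-- `condH μ X Y` is the conditional entropy `H(X | Y)`. -/
def condH {Ω α β : Type*} [Fintype Ω] [Fintype α] [DecidableEq α] [Fintype β] [DecidableEq β]
    (μ : Ω → ℝ) (X : Ω → α) (Y : Ω → β) : ℝ :=
  H μ (fun ω => (X ω, Y ω)) - H μ Y

lemma sum_mul_logb_le_sum_mul_logb {ι : Type*} [Fintype ι] {p q : ι → ℝ}
    (hp : ∀ i, 0 ≤ p i) (hq : ∀ i, 0 ≤ q i) (hpq : ∀ i, 0 < p i → 0 < q i)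
    (hsum : ∑ i, q i ≤ ∑ i, p i) :
    ∑ i, p i * Real.logb 2 (q i) ≤ ∑ i, p i * Real.logb 2 (p i) := by
  have hlog2 : 0 ≤ Real.log 2 := Real.log_nonneg one_le_two
  have key : ∀ i, p i * Real.logb 2 (q i) - p i * Real.logb 2 (p i) ≤
      (q i - p i) / Real.log 2 := by
    intro i
    rcases (hp i).eq_or_lt with h | h
    · simp [← h, div_nonneg (hq i) hlog2]
    have hlog : p i * Real.log (q i / p i) ≤ q i - p i :=
      calc p i * Real.log (q i / p i) ≤ p i * (q i / p i - 1) :=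
            mul_le_mul_of_nonneg_left (Real.log_le_sub_one_of_pos (div_pos (hpq i h) h)) h.le
        _ = q i - p i := by field_simp
    rw [← mul_sub, ← Real.logb_div (hpq i h).ne' h.ne', Real.logb, ← mul_div_assoc]
    exact div_le_div_of_nonneg_right hlog hlog2
  rw [← sub_nonpos, ← sum_sub_distrib]
  calc ∑ i, (p i * Real.logb 2 (q i) - p i * Real.logb 2 (p i))
      ≤ ∑ i, (q i - p i) / Real.log 2 := sum_le_sum fun i _ => key i
    _ = (∑ i, q i - ∑ i, p i) / Real.log 2 := by rw [← sum_div, sum_sub_distrib]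
    _ ≤ 0 := div_nonpos_of_nonpos_of_nonneg (sub_nonpos.2 hsum) hlog2

section ConditionalMutualInformation

variable {Ω α β γ : Type*} [Fintype Ω] [Fintype α] [DecidableEq α] [Fintype β] [DecidableEq β]
  [Fintype γ] [DecidableEq γ] (μ : Ω → ℝ) (X : Ω → α) (Y : Ω → β) (Z : Ω → γ)

lemma CMI_eq_sum :
    CMI μ X Y Z = ∑ t, distOf μ (fun ω => (X ω, Y ω, Z ω)) t *
      (Real.logb 2 (distOf μ (fun ω => (X ω, Y ω, Z ω)) t) + Real.logb 2 (distOf μ Z t.2.2)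
        - Real.logb 2 (distOf μ (fun ω => (X ω, Z ω)) (t.1, t.2.2))
        - Real.logb 2 (distOf μ (fun ω => (Y ω, Z ω)) (t.2.1, t.2.2))) := by
  have hXZ : H μ (fun ω => (X ω, Z ω)) = -∑ t, distOf μ (fun ω => (X ω, Y ω, Z ω)) t *
      Real.logb 2 (distOf μ (fun ω => (X ω, Z ω)) (t.1, t.2.2)) :=
    H_comp_eq_neg_sum μ (fun ω => (X ω, Y ω, Z ω)) fun t => (t.1, t.2.2)
  have hYZ : H μ (fun ω => (Y ω, Z ω)) = -∑ t, distOf μ (fun ω => (X ω, Y ω, Z ω)) t *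
      Real.logb 2 (distOf μ (fun ω => (Y ω, Z ω)) (t.2.1, t.2.2)) :=
    H_comp_eq_neg_sum μ (fun ω => (X ω, Y ω, Z ω)) fun t => (t.2.1, t.2.2)
  have hZ : H μ Z = -∑ t, distOf μ (fun ω => (X ω, Y ω, Z ω)) t *
      Real.logb 2 (distOf μ Z t.2.2) :=
    H_comp_eq_neg_sum μ (fun ω => (X ω, Y ω, Z ω)) fun t => t.2.2
  rw [CMI, hXZ, hYZ, hZ, H, ent]
  simp only [mul_add, mul_sub, sum_add_distrib, sum_sub_distrib]
  ring

lemma CMI_nonneg (hμ : ∀ ω, 0 ≤ μ ω) : 0 ≤ CMI μ X Y Z := by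
  rw [CMI_eq_sum]
  set V := fun ω => (X ω, Y ω, Z ω)
  set p := distOf μ V
  set pXZ := distOf μ (fun ω => (X ω, Z ω))
  set pYZ := distOf μ (fun ω => (Y ω, Z ω))
  set pZ := distOf μ Z
  have hp : ∀ t, 0 ≤ p t := distOf_nonneg μ hμ V
  have hpXZ : ∀ t, p t ≤ pXZ (t.1, t.2.2) :=
    distOf_le_distOf_comp μ hμ V fun t : α × β × γ => (t.1, t.2.2)
  have hpYZ : ∀ t, p t ≤ pYZ (t.2.1, t.2.2) :=
    distOf_le_distOf_comp μ hμ V fun t : α × β × γ => (t.2.1, t.2.2)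
  have hpZ : ∀ t, p t ≤ pZ t.2.2 := distOf_le_distOf_comp μ hμ V fun t : α × β × γ => t.2.2
  -- the product of the two conditional laws given `Z`: Gibbs' inequality against it is the claim
  let q : α × β × γ → ℝ := fun t => pXZ (t.1, t.2.2) * pYZ (t.2.1, t.2.2) / pZ t.2.2
  have hq : ∀ t, 0 ≤ q t := fun t =>
    div_nonneg (mul_nonneg ((hp t).trans (hpXZ t)) ((hp t).trans (hpYZ t))) ((hp t).trans (hpZ t))
  have hpq : ∀ t, 0 < p t → 0 < q t := fun t h =>
    div_pos (mul_pos (h.trans_le (hpXZ t)) (h.trans_le (hpYZ t))) (h.trans_le (hpZ t))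
  have hsum : ∑ t, q t = ∑ t, p t :=
    calc ∑ t, q t = ∑ c, (∑ a, pXZ (a, c)) * (∑ b, pYZ (b, c)) / pZ c := by
          simp only [q, Fintype.sum_prod_type, sum_mul_sum, sum_div]
          exact (sum_congr rfl fun _ _ => sum_comm).trans sum_comm
      _ = ∑ c, pZ c * pZ c / pZ c := by simp only [pXZ, pYZ, pZ, sum_distOf_pair_left]
      _ = ∑ t, p t := by simp only [mul_self_div_self, pZ, p, sum_distOf]
  have hterm : ∀ t, p t * (Real.logb 2 (p t) + Real.logb 2 (pZ t.2.2)
      - Real.logb 2 (pXZ (t.1, t.2.2)) - Real.logb 2 (pYZ (t.2.1, t.2.2))) =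
        p t * Real.logb 2 (p t) - p t * Real.logb 2 (q t) := by
    intro t
    rcases (hp t).eq_or_lt with h | h
    · simp [← h]
    have hXZ := (h.trans_le (hpXZ t)).ne'
    have hYZ := (h.trans_le (hpYZ t)).ne'
    have hZ := (h.trans_le (hpZ t)).ne'
    rw [Real.logb_div (mul_ne_zero hXZ hYZ) hZ, Real.logb_mul hXZ hYZ]
    ring
  simp only [hterm, sum_sub_distrib, sub_nonneg]
  exact sum_mul_logb_le_sum_mul_logb hp hq hpq hsum.le

variable {X Y Z} in
lemma CMI_eq_zero_of_condIndep (hμ : ∀ ω, 0 ≤ μ ω) (h : CondIndep μ X Y Z) :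
    CMI μ X Y Z = 0 := by
  rw [CMI_eq_sum]
  refine sum_eq_zero fun t _ => ?_
  set V := fun ω => (X ω, Y ω, Z ω)
  rcases (distOf_nonneg μ hμ V t).eq_or_lt with h0 | h0
  · rw [← h0, zero_mul]
  have hXZ := (h0.trans_le (distOf_le_distOf_comp μ hμ V (fun t => (t.1, t.2.2)) t)).ne'
  have hYZ := (h0.trans_le (distOf_le_distOf_comp μ hμ V (fun t => (t.2.1, t.2.2)) t)).ne'
  have hZ := (h0.trans_le (distOf_le_distOf_comp μ hμ V (fun t => t.2.2) t)).ne'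
  have hlog := congrArg (Real.logb 2) (h t.1 t.2.1 t.2.2)
  rw [Real.logb_mul h0.ne' hZ, Real.logb_mul hXZ hYZ] at hlog
  rw [hlog]
  ring

end ConditionalMutualInformation

lemma condIndep_of_factor {Ω α β γ : Type*} [Fintype Ω] [Fintype α] [DecidableEq α]
    [Fintype β] [DecidableEq β] [DecidableEq γ] (μ : Ω → ℝ) {X : Ω → α} {Y : Ω → β}
    {Z : Ω → γ} (F : α → γ → ℝ) (G : β → γ → ℝ)
    (hfac : ∀ a b c, distOf μ (fun ω => (X ω, Y ω, Z ω)) (a, b, c) = F a c * G b c) :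
    CondIndep μ X Y Z := by
  have hXZ : ∀ a c, distOf μ (fun ω => (X ω, Z ω)) (a, c) = F a c * ∑ b, G b c := fun a c => by
    rw [← sum_distOf_pair_right μ _ Y, mul_sum]
    refine sum_congr rfl fun b _ => ?_
    rw [← hfac, ← distOf_comp_apply_of_injective μ (fun ω => (X ω, Y ω, Z ω))
      (LeftInverse.injective (f := fun t : α × β × γ => ((t.1, t.2.2), t.2.1))
        (g := fun s => (s.1.1, s.2, s.1.2)) fun _ => rfl)]
  have hYZ : ∀ b c, distOf μ (fun ω => (Y ω, Z ω)) (b, c) = (∑ a, F a c) * G b c :=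
    fun b c => by
      rw [← sum_distOf_pair_left μ X, sum_mul]
      exact sum_congr rfl fun a _ => hfac a b c
  have hZ : ∀ c, distOf μ Z c = (∑ a, F a c) * ∑ b, G b c := fun c => by
    rw [← sum_distOf_pair_left μ Y, mul_sum]
    exact sum_congr rfl fun b _ => by rw [hYZ, mul_comm]
  intro a b c
  rw [hfac, hXZ, hYZ, hZ]
  ring



section ConditionalEntropy

variable {Ω α β γ : Type*} [Fintype Ω] [Fintype α] [DecidableEq α] [Fintype β] [DecidableEq β]
  [Fintype γ] [DecidableEq γ] (μ : Ω → ℝ)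

lemma condH_le_condH_comp (hμ : ∀ ω, 0 ≤ μ ω) (X : Ω → α) (Y : Ω → β) (f : β → γ) :
    condH μ X Y ≤ condH μ X (fun ω => f (Y ω)) := by
  have hY : H μ (fun ω => (Y ω, f (Y ω))) = H μ Y :=
    H_comp_of_leftInverse μ Y (fun y => (y, f y)) Prod.fst fun _ => rfl
  have hXY : H μ (fun ω => (X ω, Y ω, f (Y ω))) = H μ (fun ω => (X ω, Y ω)) :=
    H_comp_of_leftInverse μ (fun ω => (X ω, Y ω)) (fun t => (t.1, t.2, f t.2))
      (fun s => (s.1, s.2.1)) fun _ => rfl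
  have := CMI_nonneg μ X Y (fun ω => f (Y ω)) hμ
  rw [CMI, hY, hXY] at this
  rw [condH, condH]
  linarith

lemma condH_unit_eq_H (hμ : ∑ ω, μ ω = 1) (X : Ω → α) : condH μ X (fun _ => ()) = H μ X := by
  have hconst : H μ (fun _ => ()) = 0 := by simp [H, ent, distOf, hμ]
  rw [condH, hconst, sub_zero]
  exact H_comp_of_leftInverse μ X (fun x => (x, ())) Prod.fst fun _ => rfl

lemma condH_pi_le_sum (hμ : ∀ ω, 0 ≤ μ ω) {n : ℕ} (X : Ω → Fin n → α) (Y : Ω → β)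
    (f : Fin n → β → γ) :
    condH μ X Y ≤ ∑ i, condH μ (fun ω => X ω i) (fun ω => f i (Y ω)) := by
  induction n with
  | zero =>
    have hX : (fun ω => (X ω, Y ω)) = fun ω => ((finZeroElim, Y ω) : (Fin 0 → α) × β) :=
      funext fun ω => Prod.ext (Subsingleton.elim _ _) rfl
    rw [condH, hX, H_comp_of_leftInverse μ Y (fun y => (finZeroElim, y)) Prod.snd fun _ => rfl]
    simp
  | succ n ih =>
    have hsplit : H μ (fun ω => (X ω, Y ω)) =
        H μ (fun ω => (X ω 0, Fin.tail (X ω), Y ω)) := by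
      have := H_comp_of_leftInverse μ (fun ω => (X ω 0, Fin.tail (X ω), Y ω))
        (fun s => ((Fin.cons s.1 s.2.1 : Fin (n + 1) → α), s.2.2))
        (fun t => (t.1 0, Fin.tail t.1, t.2)) fun _ => by simp
      simpa only [Fin.cons_self_tail] using this
    calc condH μ X Y
        = condH μ (fun ω => X ω 0) (fun ω => (Fin.tail (X ω), Y ω))
          + condH μ (fun ω => Fin.tail (X ω)) Y := by
          rw [condH, condH, condH, hsplit]
          ring
      _ ≤ condH μ (fun ω => X ω 0) (fun ω => f 0 (Y ω))
          + ∑ i : Fin n, condH μ (fun ω => X ω i.succ) (fun ω => f i.succ (Y ω)) :=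
          add_le_add
            (condH_le_condH_comp μ hμ (fun ω => X ω 0) (fun ω => (Fin.tail (X ω), Y ω))
              fun s => f 0 s.2)
            (ih (fun ω => Fin.tail (X ω)) fun i => f i.succ)
      _ = ∑ i, condH μ (fun ω => X ω i) (fun ω => f i (Y ω)) := 
          (Fin.sum_univ_succ fun i => condH μ (fun ω => X ω i) (fun ω => f i (Y ω))).symm

lemma H_pi_le_sum (hμ : ∀ ω, 0 ≤ μ ω) (hμ1 : ∑ ω, μ ω = 1) {n : ℕ} (X : Ω → Fin n → α) :
    H μ X ≤ ∑ i, H μ (fun ω => X ω i) := by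
  simpa only [condH_unit_eq_H μ hμ1] using condH_pi_le_sum μ hμ X (fun _ => ()) fun _ _ => ()

lemma condH_eq_neg_sum_mul_logb (X : Ω → α) (Y : Ω → β) (K : α → β → ℝ)
    (hK : ∀ a b, distOf μ (fun ω => (X ω, Y ω)) (a, b) = distOf μ X a * K a b) :
    condH μ Y X = -∑ ω, μ ω * Real.logb 2 (K (X ω) (Y ω)) := by
  have hswap : H μ (fun ω => (Y ω, X ω)) = H μ (fun ω => (X ω, Y ω)) :=
    H_comp_of_leftInverse μ (fun ω => (X ω, Y ω)) Prod.swap Prod.swap fun _ => rfl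
  have hterm : ∀ t : α × β,
      distOf μ (fun ω => (X ω, Y ω)) t * Real.logb 2 (distOf μ (fun ω => (X ω, Y ω)) t) =
        distOf μ (fun ω => (X ω, Y ω)) t *
          (Real.logb 2 (distOf μ X t.1) + Real.logb 2 (K t.1 t.2)) := by
    rintro ⟨a, b⟩
    rw [hK]
    by_cases h0 : distOf μ X a * K a b = 0
    · rw [h0, zero_mul, zero_mul]
    · rw [Real.logb_mul (left_ne_zero_of_mul h0) (right_ne_zero_of_mul h0)]
  have hXY : H μ (fun ω => (X ω, Y ω)) =
      -∑ ω, μ ω * (Real.logb 2 (distOf μ X (X ω)) + Real.logb 2 (K (X ω) (Y ω))) := by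
    rw [H, ent, sum_congr rfl fun t _ => hterm t, sum_distOf_mul μ (fun ω => (X ω, Y ω))
      fun t => Real.logb 2 (distOf μ X t.1) + Real.logb 2 (K t.1 t.2)]
  have hX : H μ X = -∑ ω, μ ω * Real.logb 2 (distOf μ X (X ω)) := by
    rw [H, ent, sum_distOf_mul]
  rw [condH, hswap, hXY, hX]
  simp only [mul_add, sum_add_distrib]
  ring

end ConditionalEntropy

lemma MI_add_CMI_eq {Ω α β γ δ : Type*} [Fintype Ω] [Fintype α] [DecidableEq α] [Fintype β]
    [DecidableEq β] [Fintype γ] [DecidableEq γ] [Fintype δ] [DecidableEq δ] (μ : Ω → ℝ)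
    (X₁ : Ω → α) (X₂ : Ω → β) (Y₁ : Ω → γ) (Y₂ : Ω → δ) :
    MI μ X₁ Y₁ + CMI μ X₂ Y₂ X₁ =
      H μ Y₁ + condH μ Y₂ (fun ω => (X₁ ω, Y₁ ω))
        - condH μ (fun ω => (Y₁ ω, Y₂ ω)) (fun ω => (X₁ ω, X₂ ω))
        - CMI μ X₂ Y₁ (fun ω => (X₁ ω, Y₂ ω)) := by
  have h₁ : H μ (fun ω => (X₂ ω, X₁ ω)) = H μ (fun ω => (X₁ ω, X₂ ω)) :=
    H_comp_of_leftInverse μ (fun ω => (X₁ ω, X₂ ω)) Prod.swap Prod.swap fun _ => rfl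
  have h₂ : H μ (fun ω => (Y₂ ω, X₁ ω)) = H μ (fun ω => (X₁ ω, Y₂ ω)) :=
    H_comp_of_leftInverse μ (fun ω => (X₁ ω, Y₂ ω)) Prod.swap Prod.swap fun _ => rfl
  have h₃ : H μ (fun ω => (X₂ ω, Y₂ ω, X₁ ω)) = H μ (fun ω => (X₂ ω, X₁ ω, Y₂ ω)) :=
    H_comp_of_leftInverse μ (fun ω => (X₂ ω, X₁ ω, Y₂ ω)) (fun t => (t.1, t.2.2, t.2.1))
      (fun t => (t.1, t.2.2, t.2.1)) fun _ => rfl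
  have h₄ : H μ (fun ω => (Y₂ ω, X₁ ω, Y₁ ω)) = H μ (fun ω => (Y₁ ω, X₁ ω, Y₂ ω)) :=
    H_comp_of_leftInverse μ (fun ω => (Y₁ ω, X₁ ω, Y₂ ω)) (fun t => (t.2.2, t.2.1, t.1))
      (fun t => (t.2.2, t.2.1, t.1)) fun _ => rfl
  have h₅ : H μ (fun ω => ((Y₁ ω, Y₂ ω), X₁ ω, X₂ ω)) = H μ (fun ω => (X₂ ω, Y₁ ω, X₁ ω, Y₂ ω)) :=
    H_comp_of_leftInverse μ (fun ω => (X₂ ω, Y₁ ω, X₁ ω, Y₂ ω))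
      (fun t => ((t.2.1, t.2.2.2), t.2.2.1, t.1)) (fun s => (s.2.2, s.1.1, s.2.1, s.1.2))
      fun _ => rfl
  simp only [MI, CMI, condH]
  linarith

lemma sum_pi_ite_prod {ι κ : Type*} [Fintype ι] [DecidableEq ι] [Fintype κ] [DecidableEq κ]
    (g : ι → κ → ℝ) (hg : ∀ j, ∑ x, g j x = 1) (i : ι) (e : κ) :
    ∑ y : ι → κ, (if y i = e then ∏ j, g j (y j) else 0) = g i e := by
  -- the indicator of `y i = e` is absorbed into the `i`-th factor
  let g' : ι → κ → ℝ := fun j x => if j = i ∧ x ≠ e then 0 else g j x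
  have hprod : ∀ y : ι → κ, (if y i = e then ∏ j, g j (y j) else 0) = ∏ j, g' j (y j) := by
    intro y
    split_ifs with h
    · refine prod_congr rfl fun j _ => ?_
      simp only [g']
      rw [if_neg]
      rintro ⟨rfl, hne⟩
      exact hne h
    · exact (prod_eq_zero (mem_univ i) (by simp [g', h])).symm
  simp only [hprod, ← Fintype.prod_sum]
  rw [prod_eq_single i (fun j _ hj => by simp [g', hj, hg]) (by simp)]
  simp [g']

lemma IsPMF.mul {α β : Type*} [Fintype α] [Fintype β] {p : α → ℝ} {q : β → ℝ}
    (hp : IsPMF p) (hq : IsPMF q) : IsPMF fun x : α × β => p x.1 * q x.2 :=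
  ⟨fun x => mul_nonneg (hp.1 _) (hq.1 _), by
    rw [Fintype.sum_prod_type, ← sum_mul_sum, hp.2, hq.2, one_mul]⟩

section Channel

variable {A1 A2 B1 B2 : Type*} [Fintype B1] [Fintype B2] {W : A1 → A2 → B1 × B2 → ℝ}

lemma ChainX2X1Y2Y1.isChannel (hchain : ChainX2X1Y2Y1 W) : IsChannel W := by
  obtain ⟨pa, q, hpa, hq, hW⟩ := hchain
  refine fun x₁ x₂ => ⟨fun y => ?_, ?_⟩
  · rw [hW]
    exact mul_nonneg ((hpa x₁ x₂).1 _) ((hq x₁ _).1 _)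
  · simp only [Fintype.sum_prod_type_right, hW, ← mul_sum, (hq _ _).2, mul_one]
    exact (hpa x₁ x₂).2

lemma IsChannel.sum_nFold (hW : IsChannel W) {n : ℕ} (u : Fin n → A1) (v : Fin n → A2) :
    ∑ y, nFold W n u v y = 1 := by
  rw [← (Equiv.arrowProdEquivProdArrow (Fin n) (fun _ => B1) (fun _ => B2)).sum_comp]
  simp only [nFold, Equiv.arrowProdEquivProdArrow_apply, ← Fintype.prod_sum]
  exact prod_eq_one fun j _ => (hW _ _).2

lemma IsChannel.sum_nFold_ite_letter [DecidableEq B1] [DecidableEq B2] (hW : IsChannel W)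
    {n : ℕ} (u : Fin n → A1) (v : Fin n → A2) (i : Fin n) (e : B1 × B2) :
    ∑ y, (if (y.1 i, y.2 i) = e then nFold W n u v y else 0) = W (u i) (v i) e := by
  rw [← (Equiv.arrowProdEquivProdArrow (Fin n) (fun _ => B1) (fun _ => B2)).sum_comp]
  simp only [nFold, Equiv.arrowProdEquivProdArrow_apply]
  exact sum_pi_ite_prod (fun j => W (u j) (v j)) (fun j => (hW _ _).2) i e

end Channel

/-- The coordinates of the sample space are `(X₁ⁿ, X₂ⁿ, Y₁ⁿ, Y₂ⁿ)`; `P` is the joint pmf of the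
input blocks. -/
def blockJoint {A1 A2 B1 B2 : Type*} (W : A1 → A2 → B1 × B2 → ℝ) {n : ℕ}
    (P : (Fin n → A1) × (Fin n → A2) → ℝ) :
    (Fin n → A1) × (Fin n → A2) × (Fin n → B1) × (Fin n → B2) → ℝ :=
  fun z => P (z.1, z.2.1) * nFold W n z.1 z.2.1 (z.2.2.1, z.2.2.2)

section BlockJoint

variable {A1 A2 B1 B2 : Type*} {n : ℕ} {W : A1 → A2 → B1 × B2 → ℝ}
  {P : (Fin n → A1) × (Fin n → A2) → ℝ}

lemma blockJoint_nonneg [Fintype B1] [Fintype B2] (hW : IsChannel W) (hP : ∀ x, 0 ≤ P x)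
    (z : (Fin n → A1) × (Fin n → A2) × (Fin n → B1) × (Fin n → B2)) : 0 ≤ blockJoint W P z :=
  mul_nonneg (hP _) (prod_nonneg fun _ _ => (hW _ _).1 _)

variable [Fintype A1] [Fintype A2] [Fintype B1] [Fintype B2]

lemma sum_blockJoint_mul (F : (Fin n → A1) × (Fin n → A2) × (Fin n → B1) × (Fin n → B2) → ℝ) :
    ∑ z, blockJoint W P z * F z = ∑ x, P x * ∑ y, nFold W n x.1 x.2 y * F (x.1, x.2, y) := by
  rw [← (Equiv.prodAssoc _ _ _).sum_comp, Fintype.sum_prod_type]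
  simp only [blockJoint, Equiv.prodAssoc_apply, mul_sum, mul_assoc]

lemma isPMF_blockJoint (hW : IsChannel W) (hP : IsPMF P) : IsPMF (blockJoint W P) := by
  refine ⟨blockJoint_nonneg hW hP.1, ?_⟩
  simpa [hW.sum_nFold, hP.2] using sum_blockJoint_mul (W := W) (P := P) 1

lemma distOf_blockJoint_input_output {α β : Type*} [DecidableEq α] [DecidableEq β]
    (g : (Fin n → A1) × (Fin n → A2) → α) (h : (Fin n → B1) × (Fin n → B2) → β)
    (k : α → β → ℝ) (hk : ∀ x e, ∑ y, (if h y = e then nFold W n x.1 x.2 y else 0) = k (g x) e)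
    (a : α) (e : β) :
    distOf (blockJoint W P) (fun z => (g (z.1, z.2.1), h z.2.2)) (a, e) =
      distOf P g a * k a e :=
  calc distOf (blockJoint W P) (fun z => (g (z.1, z.2.1), h z.2.2)) (a, e)
      = ∑ z, blockJoint W P z * (if (g (z.1, z.2.1), h z.2.2) = (a, e) then 1 else 0) := by
        simp [distOf]
    _ = ∑ x, P x * ∑ y, nFold W n x.1 x.2 y * (if (g x, h y) = (a, e) then 1 else 0) :=
        sum_blockJoint_mul _
    _ = ∑ x, if g x = a then P x * k a e else 0 := sum_congr rfl fun x _ => by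
        split_ifs with hx
        · simp [hx, hk]
        · simp [hx]
    _ = distOf P g a * k a e := by simp [distOf, sum_mul, ite_mul]

lemma distOf_blockJoint_input {α : Type*} [DecidableEq α] (hW : IsChannel W)
    (g : (Fin n → A1) × (Fin n → A2) → α) :
    distOf (blockJoint W P) (fun z => g (z.1, z.2.1)) = distOf P g := by
  funext a
  calc distOf (blockJoint W P) (fun z => g (z.1, z.2.1)) a
      = ∑ z, blockJoint W P z * (if g (z.1, z.2.1) = a then 1 else 0) := by simp [distOf]
    _ = ∑ x, P x * ∑ y, nFold W n x.1 x.2 y * (if g x = a then 1 else 0) :=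
        sum_blockJoint_mul _
    _ = distOf P g a := by simp [distOf, hW.sum_nFold]

variable [DecidableEq A1] [DecidableEq A2] [DecidableEq B1] [DecidableEq B2]

lemma condH_blockJoint_outputs (hW : IsChannel W) :
    condH (blockJoint W P) (fun z => (z.2.2.1, z.2.2.2)) (fun z => (z.1, z.2.1)) =
      -∑ z, blockJoint W P z * Real.logb 2 (nFold W n z.1 z.2.1 (z.2.2.1, z.2.2.2)) :=
  condH_eq_neg_sum_mul_logb (blockJoint W P) (fun z => (z.1, z.2.1)) (fun z => (z.2.2.1, z.2.2.2))
    (fun x y => nFold W n x.1 x.2 y) fun x y => by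
      rw [distOf_blockJoint_input hW fun x => x]
      exact distOf_blockJoint_input_output (W := W) (P := P) (fun x => x) (fun y => y)
        (fun x y => nFold W n x.1 x.2 y) (fun x y => by simp) x y

lemma condH_blockJoint_letter (hW : IsChannel W) (i : Fin n) :
    condH (blockJoint W P) (fun z => (z.2.2.1 i, z.2.2.2 i)) (fun z => (z.1 i, z.2.1 i)) =
      -∑ z, blockJoint W P z * Real.logb 2 (W (z.1 i) (z.2.1 i) (z.2.2.1 i, z.2.2.2 i)) :=
  condH_eq_neg_sum_mul_logb (blockJoint W P) (fun z => (z.1 i, z.2.1 i))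
    (fun z => (z.2.2.1 i, z.2.2.2 i)) (fun ab e => W ab.1 ab.2 e) fun ab e => by
      rw [distOf_blockJoint_input hW fun x => (x.1 i, x.2 i)]
      exact distOf_blockJoint_input_output (W := W) (P := P) (fun x => (x.1 i, x.2 i))
        (fun y => (y.1 i, y.2 i)) (fun ab e => W ab.1 ab.2 e)
        (fun x e => hW.sum_nFold_ite_letter x.1 x.2 i e) ab e

lemma condH_blockJoint_outputs_eq_sum (hW : IsChannel W) :
    condH (blockJoint W P) (fun z => (z.2.2.1, z.2.2.2)) (fun z => (z.1, z.2.1)) =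
      ∑ i, condH (blockJoint W P) (fun z => (z.2.2.1 i, z.2.2.2 i)) (fun z => (z.1 i, z.2.1 i)) := by
  simp only [condH_blockJoint_outputs hW, condH_blockJoint_letter hW, sum_neg_distrib, neg_inj]
  rw [sum_comm]
  refine sum_congr rfl fun z _ => ?_
  by_cases h0 : blockJoint W P z = 0
  · simp [h0]
  rw [← mul_sum, nFold, Real.logb_prod _ _ fun j _ => ?_]
  exact prod_ne_zero_iff.1 (right_ne_zero_of_mul h0) j (mem_univ j)

lemma CMI_blockJoint_letter_eq_zero (hchain : ChainX2X1Y2Y1 W) (hP : ∀ x, 0 ≤ P x) (i : Fin n) :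
    CMI (blockJoint W P) (fun z => z.2.1 i) (fun z => z.2.2.1 i) (fun z => (z.1 i, z.2.2.2 i)) =
      0 := by
  have hW := hchain.isChannel
  obtain ⟨pa, q, -, -, hfac⟩ := hchain
  refine CMI_eq_zero_of_condIndep _ (blockJoint_nonneg hW hP) (condIndep_of_factor _
    (fun b ad => distOf P (fun x => (x.1 i, x.2 i)) (ad.1, b) * pa ad.1 b ad.2)
    (fun c ad => q ad.1 ad.2 c) ?_)
  rintro b c ⟨a, d⟩
  calc distOf (blockJoint W P) (fun z => (z.2.1 i, z.2.2.1 i, z.1 i, z.2.2.2 i)) (b, c, a, d)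
      = distOf (blockJoint W P) (fun z => ((z.1 i, z.2.1 i), (z.2.2.1 i, z.2.2.2 i)))
          ((a, b), (c, d)) :=
        distOf_comp_apply_of_injective (blockJoint W P)
          (fun z => ((z.1 i, z.2.1 i), (z.2.2.1 i, z.2.2.2 i)))
          (f := fun t => (t.1.2, t.2.1, t.1.1, t.2.2))
          (LeftInverse.injective (g := fun s => ((s.2.2.1, s.1), (s.2.1, s.2.2.2))) fun _ => rfl)
          ((a, b), (c, d))
    _ = distOf P (fun x => (x.1 i, x.2 i)) (a, b) * W a b (c, d) :=
        distOf_blockJoint_input_output (fun x => (x.1 i, x.2 i)) (fun y => (y.1 i, y.2 i))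
          (fun ab e => W ab.1 ab.2 e) (fun x e => hW.sum_nFold_ite_letter x.1 x.2 i e) (a, b) (c, d)
    _ = _ := by rw [hfac]; ring

theorem MI_add_CMI_blockJoint_le_sum (hchain : ChainX2X1Y2Y1 W) (hP : IsPMF P) :
    MI (blockJoint W P) (fun z => z.1) (fun z => z.2.2.1)
        + CMI (blockJoint W P) (fun z => z.2.1) (fun z => z.2.2.2) (fun z => z.1)
      ≤ ∑ i : Fin n,
          (MI (blockJoint W P) (fun z => z.1 i) (fun z => z.2.2.1 i)
            + CMI (blockJoint W P) (fun z => z.2.1 i) (fun z => z.2.2.2 i) (fun z => z.1 i)) := by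
  have hW := hchain.isChannel
  obtain ⟨hμ, hμ1⟩ := isPMF_blockJoint hW hP
  have hY₁ := H_pi_le_sum (blockJoint W P) hμ hμ1 fun z => z.2.2.1
  have hY₂ : condH (blockJoint W P) (fun z => z.2.2.2) (fun z => (z.1, z.2.2.1)) ≤
      ∑ i, condH (blockJoint W P) (fun z => z.2.2.2 i) (fun z => (z.1 i, z.2.2.1 i)) :=
    condH_pi_le_sum (blockJoint W P) hμ (fun z => z.2.2.2) (fun z => (z.1, z.2.2.1))
      fun i c => (c.1 i, c.2 i)
  have hCMI := CMI_nonneg (blockJoint W P) (fun z => z.2.1) (fun z => z.2.2.1)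
    (fun z => (z.1, z.2.2.2)) hμ
  simp only [MI_add_CMI_eq, CMI_blockJoint_letter_eq_zero hchain hP.1, sub_zero,
    condH_blockJoint_outputs_eq_sum hW, sum_add_distrib, sum_sub_distrib]
  linarith

end BlockJoint

theorem nLetter_sum_bound_mixed_chain_general {A1 A2 B1 B2 : Type} [Fintype A1] [DecidableEq A1] [Fintype A2] [DecidableEq A2]
    [Fintype B1] [DecidableEq B1] [Fintype B2] [DecidableEq B2]
    (W : A1 → A2 → B1 × B2 → ℝ) (hchain : ChainX2X1Y2Y1 W) (n : ℕ)
    (P1 : (Fin n → A1) → ℝ) (P2 : (Fin n → A2) → ℝ) (hP1 : IsPMF P1) (hP2 : IsPMF P2) :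
    let μ : (Fin n → A1) × (Fin n → A2) × (Fin n → B1) × (Fin n → B2) → ℝ :=
      fun z => P1 z.1 * P2 z.2.1 * nFold W n z.1 z.2.1 (z.2.2.1, z.2.2.2)
    MI μ (fun z => z.1) (fun z => z.2.2.1)
        + CMI μ (fun z => z.2.1) (fun z => z.2.2.2) (fun z => z.1)
      ≤ ∑ i : Fin n,
          (MI μ (fun z => z.1 i) (fun z => z.2.2.1 i)
            + CMI μ (fun z => z.2.1 i) (fun z => z.2.2.2 i) (fun z => z.1 i)) :=
  MI_add_CMI_blockJoint_le_sum (P := fun x => P1 x.1 * P2 x.2) hchain (hP1.mul hP2)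

/-- For a DMIC satisfying the Markov chain `X2 - (X1,Y2) - Y1`, used `n`
times memorylessly with independent input blocks,
`I(X1^n;Y1^n) + I(X2^n;Y2^n|X1^n) ≤ ∑ i, [ I(X1i;Y1i) + I(X2i;Y2i|X1i) ]`. -/
theorem nLetter_sum_bound_mixed_chain {A1 A2 B1 B2 : Type} [Fintype A1] [DecidableEq A1] [Fintype A2] [DecidableEq A2]
    [Fintype B1] [DecidableEq B1] [Fintype B2] [DecidableEq B2]
    (W : A1 → A2 → B1 × B2 → ℝ) (hW : IsChannel W) (hchain : ChainX2X1Y2Y1 W) (n : ℕ)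
    (P1 : (Fin n → A1) → ℝ) (P2 : (Fin n → A2) → ℝ) (hP1 : IsPMF P1) (hP2 : IsPMF P2) :
    let μ : (Fin n → A1) × (Fin n → A2) × (Fin n → B1) × (Fin n → B2) → ℝ :=
      fun z => P1 z.1 * P2 z.2.1 * nFold W n z.1 z.2.1 (z.2.2.1, z.2.2.2)
    MI μ (fun z => z.1) (fun z => z.2.2.1)
        + CMI μ (fun z => z.2.1) (fun z => z.2.2.2) (fun z => z.1)
      ≤ ∑ i : Fin n,
          (MI μ (fun z => z.1 i) (fun z => z.2.2.1 i)
            + CMI μ (fun z => z.2.1 i) (fun z => z.2.2.2 i) (fun z => z.1 i)) :=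
  nLetter_sum_bound_mixed_chain_general W hchain n P1 P2 hP1 hP2

end IT
end
end

section
/- There exists a one-sided binary channel for which the mutual information condition I(X2;Y2) >= I(X2;Y1|X1) holds for all product inputs but the Markov chain X2 - (X1,Y2) - Y1 factorization fails. Concretely, let the marginal channels be p(y1=1|x1=0,x2=0)=0.1, p(y1=1|x1=0,x2=1)=0.3, p(y1=1|x1=1,x2=0)=0.5, p(y1=1|x1=1,x2=1)=0.25, and p(y2=1|x2=0)=0.1, p(y2=1|x2=1)=0.5 (with p(y2|x1,x2)=p(y2|x2)). Then: (i) for every pair of independent binary random variables X1 ~ Bernoulli(p1), X2 ~ Bernoulli(p2) with p1, p2 in [0,1], I(X2;Y2) >= I(X2;Y1|X1); and (ii) there is no conditional probability q(y1|x1,y2) on {0,1} such that p(y1|x1,x2) = sum_{y2} p(y2|x2) q(y1|x1,y2) for all x1, x2, y1. -/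
/-!
Both sides split over input letters. If `I(p, W)` denotes the mutual information between an input
`X ~ p` and the output of a channel `W`, then `I(X2;Y1|X1) = ∑ x1, p1 x1 * I(p2, W1(x1, ·))` and
`I(X2;Y2) = I(p2, W2)`, so it suffices to compare each binary channel `W1(x1, ·)` with `W2`.
For a binary channel with `P(Y = 1 | X = 0) = a`, `P(Y = 1 | X = 1) = b` and input
Bernoulli(`t`), the mutual information (in nats) is `h((1-t)a + tb) - (1-t)h(a) - t h(b)`.
It vanishes at `t = 0, 1` and has second derivative `-(b-a)²/(u(1-u))`, `u = (1-t)a + tb`;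
comparing second derivatives shows that the difference of two such functions is concave, hence
nonnegative on `[0, 1]`. The channels `(0.1, 0.3)` and `(0.5, 0.25)` both lose against `(0.1, 0.5)`.

The factorisation fails at `x1 = 1`: the two equations for `q(1 | 1, ·)` force
`q(1 | 1, 1) = -1/16`.
-/

open scoped BigOperators

noncomputable section

namespace IT

/-- `P(Y1 = 1 | X1 = x1, X2 = x2)` for the counterexample channel. -/
def fval : Bool → Bool → ℝ := fun x1 x2 =>
  if x1 then (if x2 then 0.25 else 0.5) else (if x2 then 0.3 else 0.1)

/-- `P(Y2 = 1 | X2 = x2)` for the counterexample channel. -/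
def gval : Bool → ℝ := fun x2 => if x2 then 0.5 else 0.1

/-- Marginal channel to receiver 1: `p(y1|x1,x2)`. -/
def W1m : Bool → Bool → Bool → ℝ := fun x1 x2 y1 => if y1 then fval x1 x2 else 1 - fval x1 x2

/-- Marginal channel to receiver 2: `p(y2|x2)` (one-sided interference). -/
def W2m : Bool → Bool → ℝ := fun x2 y2 => if y2 then gval x2 else 1 - gval x2

open Real

section Entropy

open Finset

variable {Ω α β : Type*} [Fintype α] [Fintype β]

lemma ent_eq_sum_negMulLog (p : α → ℝ) : ent p = (∑ a, negMulLog (p a)) / log 2 := by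
  simp only [ent, negMulLog, logb, Finset.sum_div, ← Finset.sum_neg_distrib]
  congr 1; ext a; ring

lemma ent_comp_equiv (p : α → ℝ) (e : β ≃ α) : ent (p ∘ e) = ent p := by
  simp only [ent, Function.comp_apply, e.sum_comp (fun a => p a * logb 2 (p a))]

lemma ent_mul_kernel (w : α → ℝ) (g : α → β → ℝ) (hg : ∀ a, ∑ b, g a b = 1) :
    ent (fun q : α × β => w q.1 * g q.1 q.2) = ent w + ∑ a, w a * ent (g a) := by
  simp only [ent_eq_sum_negMulLog, negMulLog_mul, Fintype.sum_prod_type, sum_add_distrib,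
    ← sum_mul, ← mul_sum, hg, one_mul, ← sum_div, mul_div_assoc', add_div]

lemma ent_mul_kernel_swap (w : α → ℝ) (g : α → β → ℝ) (hg : ∀ a, ∑ b, g a b = 1) :
    ent (fun q : β × α => w q.2 * g q.2 q.1) = ent w + ∑ a, w a * ent (g a) := by
  rw [← ent_mul_kernel w g hg, ← ent_comp_equiv _ (Equiv.prodComm β α)]
  rfl

variable [DecidableEq α] [Fintype Ω]

lemma distOf_equiv (μ : Ω → ℝ) (e : Ω ≃ α) : distOf μ e = μ ∘ e.symm := by
  ext a
  rw [distOf, ← e.symm.sum_comp]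
  simp

lemma H_equiv (μ : Ω → ℝ) (e : Ω ≃ α) : H μ e = ent μ := by
  rw [H, distOf_equiv, ent_comp_equiv]

end Entropy

section Channel

open Finset

variable {α β γ : Type*} [Fintype α] [Fintype β]

def outputDist (p : α → ℝ) (W : α → β → ℝ) : β → ℝ := fun y => ∑ x, p x * W x y

lemma sum_outputDist (p : α → ℝ) (W : α → β → ℝ) (hW : ∀ x, ∑ y, W x y = 1) :
    ∑ y, outputDist p W y = ∑ x, p x := by
  simp only [outputDist]
  rw [sum_comm]
  simp [← mul_sum, hW]

def channelMI (p : α → ℝ) (W : α → β → ℝ) : ℝ := ent (outputDist p W) - ∑ x, p x * ent (W x)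

variable [DecidableEq α] [DecidableEq β]

lemma MI_eq_channelMI (p : α → ℝ) (W : α → β → ℝ) (hW : ∀ x, ∑ y, W x y = 1) :
    MI (fun z : α × β => p z.1 * W z.1 z.2) (fun z => z.1) (fun z => z.2) = channelMI p W := by
  have hX : distOf (fun z : α × β => p z.1 * W z.1 z.2) (fun z => z.1) = p := by
    ext x; simp [distOf, Fintype.sum_prod_type, ← mul_sum, hW]
  have hY : distOf (fun z : α × β => p z.1 * W z.1 z.2) (fun z => z.2) = outputDist p W := by
    ext y; simp [distOf, Fintype.sum_prod_type, outputDist]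
  have hXY : H (fun z : α × β => p z.1 * W z.1 z.2) (fun z => (z.1, z.2))
      = ent p + ∑ x, p x * ent (W x) :=
    (H_equiv _ (Equiv.refl _)).trans (ent_mul_kernel p W hW)
  rw [MI, hXY, H, H, hX, hY, channelMI]
  ring

lemma CMI_eq_sum_channelMI [Fintype γ] [DecidableEq γ] (p1 : α → ℝ) (p2 : β → ℝ)
    (W : α → β → γ → ℝ) (hp2 : ∑ x, p2 x = 1) (hW : ∀ x1 x2, ∑ y, W x1 x2 y = 1) :
    CMI (fun z : α × β × γ => p1 z.1 * p2 z.2.1 * W z.1 z.2.1 z.2.2)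
        (fun z => z.2.1) (fun z => z.2.2) (fun z => z.1)
      = ∑ x1, p1 x1 * channelMI p2 (W x1) := by
  set μ : α × β × γ → ℝ := fun z => p1 z.1 * p2 z.2.1 * W z.1 z.2.1 z.2.2
  have hX1 : distOf μ (fun z => z.1) = p1 := by
    ext x; simp [μ, distOf, Fintype.sum_prod_type, ← mul_sum, hW, hp2]
  have hX2X1 : distOf μ (fun z => (z.2.1, z.1)) = fun q => p1 q.2 * p2 q.1 := by
    ext ⟨x2, x1⟩; simp [μ, distOf, Fintype.sum_prod_type, ← mul_sum, hW, ite_and]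
  have hYX1 :
      distOf μ (fun z => (z.2.2, z.1)) = fun q => p1 q.2 * outputDist p2 (W q.2) q.1 := by
    ext ⟨y, x1⟩; simp [μ, distOf, Fintype.sum_prod_type, outputDist, mul_sum, mul_assoc, ite_and]
  have hAll : H μ (fun z => (z.2.1, z.2.2, z.1)) = ent μ :=
    H_equiv μ ((Equiv.prodComm _ _).trans (Equiv.prodAssoc _ _ _))
  have hJoint : ent μ = ent p1 + ∑ x1, p1 x1 * (ent p2 + ∑ x2, p2 x2 * ent (W x1 x2)) := by
    have hg : ∀ x1, ∑ q : β × γ, p2 q.1 * W x1 q.1 q.2 = 1 := fun x1 => by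
      simp [Fintype.sum_prod_type, ← mul_sum, hW, hp2]
    simp only [μ, mul_assoc]
    rw [ent_mul_kernel p1 (fun x1 (q : β × γ) => p2 q.1 * W x1 q.1 q.2) hg]
    simp only [ent_mul_kernel p2 _ (hW _)]
  rw [CMI, hAll, hJoint, H, H, H, hX2X1, hYX1, hX1,
    ent_mul_kernel_swap p1 (fun _ => p2) (fun _ => hp2),
    ent_mul_kernel_swap p1 (fun x1 => outputDist p2 (W x1))
      (fun x1 => (sum_outputDist p2 (W x1) (hW x1)).trans hp2)]
  simp only [channelMI, mul_add, mul_sub, sum_add_distrib, sum_sub_distrib]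
  ring

end Channel

section BinaryMI

open Set

def binaryMI (a b t : ℝ) : ℝ :=
  binEntropy ((1 - t) * a + t * b) - (1 - t) * binEntropy a - t * binEntropy b

variable {a b a' b' t : ℝ}

lemma binaryMI_zero (a b : ℝ) : binaryMI a b 0 = 0 := by simp [binaryMI]

lemma binaryMI_one (a b : ℝ) : binaryMI a b 1 = 0 := by simp [binaryMI]

lemma lerp_mem_Ioo (ha : a ∈ Ioo 0 1) (hb : b ∈ Ioo 0 1) (ht : t ∈ Icc 0 1) :
    (1 - t) * a + t * b ∈ Ioo 0 1 := by
  simpa using (convex_Ioo (0 : ℝ) 1) ha hb (sub_nonneg.2 ht.2) ht.1 (by ring)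

lemma hasDerivAt_lerp (a b t : ℝ) : HasDerivAt (fun t => (1 - t) * a + t * b) (b - a) t :=
  ((((hasDerivAt_id t).const_sub 1).mul_const a).add
    ((hasDerivAt_id t).mul_const b)).congr_deriv (by ring)

def binaryMIDeriv (a b t : ℝ) : ℝ :=
  (b - a) * (log (1 - ((1 - t) * a + t * b)) - log ((1 - t) * a + t * b))
    + binEntropy a - binEntropy b

lemma hasDerivAt_binaryMI (hu : (1 - t) * a + t * b ∈ Ioo 0 1) :
    HasDerivAt (binaryMI a b) (binaryMIDeriv a b t) t := by
  have hH := (hasDerivAt_binEntropy hu.1.ne' hu.2.ne).comp t (hasDerivAt_lerp a b t)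
  have hlin : HasDerivAt (fun t => (1 - t) * binEntropy a + t * binEntropy b)
      (binEntropy b - binEntropy a) t := hasDerivAt_lerp _ _ t
  have hfun : binaryMI a b = (binEntropy ∘ fun t => (1 - t) * a + t * b)
      - fun t => (1 - t) * binEntropy a + t * binEntropy b := by
    ext s; simp only [binaryMI, Pi.sub_apply, Function.comp_apply]; ring
  rw [hfun]
  exact (hH.sub hlin).congr_deriv (by rw [binaryMIDeriv]; ring)

lemma hasDerivAt_binaryMI_deriv (hu : (1 - t) * a + t * b ∈ Ioo 0 1) :
    HasDerivAt (binaryMIDeriv a b)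
      (-((b - a) ^ 2 / (((1 - t) * a + t * b) * (1 - ((1 - t) * a + t * b))))) t := by
  set u := (1 - t) * a + t * b
  have hu0 : u ≠ 0 := hu.1.ne'
  have hu1 : 1 - u ≠ 0 := sub_ne_zero.2 hu.2.ne'
  have hlog := hasDerivAt_log hu0 |>.comp t (hasDerivAt_lerp a b t)
  have hlog1 := hasDerivAt_log hu1 |>.comp t ((hasDerivAt_lerp a b t).const_sub 1)
  refine ((((hlog1.sub hlog).const_mul (b - a)).add_const (binEntropy a)).sub_const
    (binEntropy b)).congr_deriv ?_
  field_simp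
  ring

lemma binaryMI_le_binaryMI (ha : a ∈ Ioo 0 1) (hb : b ∈ Ioo 0 1) (ha' : a' ∈ Ioo 0 1)
    (hb' : b' ∈ Ioo 0 1)
    (hcurv : ∀ t ∈ Ioo (0 : ℝ) 1,
      (b' - a') ^ 2 * (((1 - t) * a + t * b) * (1 - ((1 - t) * a + t * b)))
        ≤ (b - a) ^ 2 * (((1 - t) * a' + t * b') * (1 - ((1 - t) * a' + t * b'))))
    (ht : t ∈ Icc 0 1) : binaryMI a' b' t ≤ binaryMI a b t := by
  have hconc : ConcaveOn ℝ (Icc 0 1) (fun t => binaryMI a b t - binaryMI a' b' t) := by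
    refine concaveOn_of_hasDerivWithinAt2_nonpos (convex_Icc 0 1)
      (f' := fun t => binaryMIDeriv a b t - binaryMIDeriv a' b' t)
      (f'' := fun t => -((b - a) ^ 2 / (((1 - t) * a + t * b) * (1 - ((1 - t) * a + t * b))))
        - -((b' - a') ^ 2 / (((1 - t) * a' + t * b') * (1 - ((1 - t) * a' + t * b')))))
      (by unfold binaryMI; fun_prop) (fun t ht => ?_) (fun t ht => ?_) (fun t ht => ?_)
    all_goals
      rw [interior_Icc] at ht
      have hu := lerp_mem_Ioo ha hb (Ioo_subset_Icc_self ht)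
      have hu' := lerp_mem_Ioo ha' hb' (Ioo_subset_Icc_self ht)
    · exact ((hasDerivAt_binaryMI hu).sub (hasDerivAt_binaryMI hu')).hasDerivWithinAt
    · exact ((hasDerivAt_binaryMI_deriv hu).sub (hasDerivAt_binaryMI_deriv hu')).hasDerivWithinAt
    · have hv := mul_pos hu.1 (sub_pos.2 hu.2)
      have hv' := mul_pos hu'.1 (sub_pos.2 hu'.2)
      rw [neg_sub_neg, sub_nonpos, div_le_div_iff₀ hv' hv]
      exact hcurv t ht
  have hend := hconc.ge_on_segment (left_mem_Icc.2 zero_le_one) (right_mem_Icc.2 zero_le_one)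
    ((segment_eq_Icc (zero_le_one (α := ℝ))).symm ▸ ht)
  simp only [binaryMI_zero, binaryMI_one, sub_zero, min_self] at hend
  linarith

end BinaryMI

section BernoulliKernel

open Finset

variable {α : Type*}

def bernoulliKernel (θ : α → ℝ) : α → Bool → ℝ := fun x y => if y then θ x else 1 - θ x

lemma sum_bernoulliKernel (θ : α → ℝ) (x : α) : ∑ y, bernoulliKernel θ x y = 1 := by
  simp [bernoulliKernel]

lemma ent_eq_binEntropy (f : Bool → ℝ) (hf : f false = 1 - f true) :
    ent f = binEntropy (f true) / log 2 := by
  rw [ent_eq_sum_negMulLog, Fintype.sum_bool, hf, binEntropy_eq_negMulLog_add_negMulLog_one_sub]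

lemma channelMI_bernoulliKernel [Fintype α] (p θ : α → ℝ) (hp : ∑ x, p x = 1) :
    channelMI p (bernoulliKernel θ)
      = (binEntropy (∑ x, p x * θ x) - ∑ x, p x * binEntropy (θ x)) / log 2 := by
  have hout :
      outputDist p (bernoulliKernel θ) false = 1 - outputDist p (bernoulliKernel θ) true := by
    simp [outputDist, bernoulliKernel, mul_sub, sum_sub_distrib, hp]
  rw [channelMI, ent_eq_binEntropy _ hout, sub_div, sum_div]
  simp [outputDist, bernoulliKernel, ent_eq_binEntropy, mul_div_assoc]

lemma channelMI_bernoulliKernel_bool (p θ : Bool → ℝ) (hp : ∑ x, p x = 1) :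
    channelMI p (bernoulliKernel θ) = binaryMI (θ false) (θ true) (p true) / log 2 := by
  rw [Fintype.sum_bool] at hp
  rw [channelMI_bernoulliKernel p θ (by rw [Fintype.sum_bool, hp]), binaryMI]
  simp only [Fintype.sum_bool]
  rw [show p false = 1 - p true by linarith, add_comm (p true * θ true)]
  ring

end BernoulliKernel

lemma IsPMF.sum_mul_le {α : Type*} [Fintype α] {p f : α → ℝ} {c : ℝ} (hp : IsPMF p)
    (hf : ∀ a, f a ≤ c) : ∑ a, p a * f a ≤ c :=
  calc ∑ a, p a * f a ≤ ∑ a, p a * c := Finset.sum_le_sum fun a _ =>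
        mul_le_mul_of_nonneg_left (hf a) (hp.1 a)
    _ = c := by rw [← Finset.sum_mul, hp.2, one_mul]

lemma channelMI_W1m_le_W2m (p2 : Bool → ℝ) (hp2 : IsPMF p2) (x1 : Bool) :
    channelMI p2 (W1m x1) ≤ channelMI p2 W2m := by
  rw [show W1m x1 = bernoulliKernel (fval x1) from rfl, show W2m = bernoulliKernel gval from rfl,
    channelMI_bernoulliKernel_bool _ _ hp2.2, channelMI_bernoulliKernel_bool _ _ hp2.2]
  have ht : p2 true ∈ Set.Icc 0 1 :=
    ⟨hp2.1 true, by linarith [hp2.1 false, (Fintype.sum_bool p2).symm.trans hp2.2]⟩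
  gcongr
  cases x1 <;>
    refine binaryMI_le_binaryMI (by norm_num [gval]) (by norm_num [gval]) (by norm_num [fval])
      (by norm_num [fval]) (fun s hs => ?_) ht <;>
    norm_num [fval, gval] <;> nlinarith [hs.1, hs.2]

lemma W1m_not_factors_through_W2m :
    ¬ ∃ q : Bool → Bool → Bool → ℝ, (∀ x1 y2, IsPMF (q x1 y2)) ∧
        ∀ x1 x2 y1, W1m x1 x2 y1 = ∑ y2, W2m x2 y2 * q x1 y2 y1 := by
  rintro ⟨q, hq, hfac⟩
  have h0 : (0.5 : ℝ) = 0.9 * q true false true + 0.1 * q true true true := by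
    have h := hfac true false true
    norm_num [W1m, W2m, fval, gval] at h
    linarith
  have h1 : (0.25 : ℝ) = 0.5 * q true false true + 0.5 * q true true true := by
    have h := hfac true true true
    norm_num [W1m, W2m, fval, gval] at h
    linarith
  linarith [(hq true true).1 true]

/-- For this one-sided binary channel, (i) `I(X2;Y2) ≥ I(X2;Y1|X1)` for
every product input, yet (ii) there is no conditional probability `q(y1|x1,y2)` with
`p(y1|x1,x2) = ∑ y2, p(y2|x2) q(y1|x1,y2)`, i.e. the Markov chain `X2 - (X1,Y2) - Y1`
factorization fails. -/
theorem counterexample_MI_without_markov :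
    (∀ p1 p2 : Bool → ℝ, IsPMF p1 → IsPMF p2 →
      CMI (fun z : Bool × Bool × Bool => p1 z.1 * p2 z.2.1 * W1m z.1 z.2.1 z.2.2)
          (fun z => z.2.1) (fun z => z.2.2) (fun z => z.1)
        ≤ MI (fun z : Bool × Bool => p2 z.1 * W2m z.1 z.2) (fun z => z.1) (fun z => z.2))
    ∧ ¬ ∃ q : Bool → Bool → Bool → ℝ, (∀ x1 y2, IsPMF (q x1 y2)) ∧
        ∀ x1 x2 y1, W1m x1 x2 y1 = ∑ y2, W2m x2 y2 * q x1 y2 y1 := by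
  refine ⟨fun p1 p2 hp1 hp2 => ?_, W1m_not_factors_through_W2m⟩
  rw [CMI_eq_sum_channelMI p1 p2 W1m hp2.2 fun x1 => sum_bernoulliKernel (fval x1),
    MI_eq_channelMI p2 W2m (sum_bernoulliKernel gval)]
  exact hp1.sum_mul_le (channelMI_W1m_le_W2m p2 hp2)

end IT
end
end
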